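/- (Theorem: Omega(sqrt(ln n)) lower bound) There exists a constant C > 0 such that for every q >= 1 and every deterministic online algorithm A : List (Finset ((Fin q) -> Bool)) -> ℕ, there exists a finite sequence S of subsets of the universe U = (Fin q -> Bool) (of size n = 2^q) satisfying T_opt(S) >= floor(q/2) and T(A, S) <= C * sqrt(q). Consequently, since q = log_2 n, every online algorithm has competitive ratio Omega(sqrt(ln n)). -/

import Mathlib

/-!
With `m = ⌊q/2⌋`, first feed the atoms `{x | xᵢ = true}` for `2m` distinct coordinates `i`. List
them in increasing order of the bin the algorithm chose and pair the `p`-th with the `(m + p)`-th;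
then feed, for every pair `(i, j)`, the completer `{x | xᵢ = false ∧ xⱼ = false}`. Each pair
together with its completer covers the universe, so `T_opt ≥ m`. The point that is `false`
exactly at the coordinates of the atoms in bin `β` escapes every atom in `β` and lies only in
completers of pairs with both atoms in `β`. So a full bin contains both atoms of some pair, hence
the whole middle of the bin order, and at most one bin is full: `T(A, S) ≤ 1`.
-/

/-- The union of the subsets assigned to bin `b` by the online algorithm `A` on the
arrival sequence `S`: the `j`-th subset is irrevocably assigned to bin
`A [S_1, …, S_j]`. -/
def binUnion {U : Type*} [DecidableEq U] (A : List (Finset U) → ℕ)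
    (S : List (Finset U)) (b : ℕ) : Finset U :=
  (Finset.range S.length).sup fun j =>
    if A (S.take (j + 1)) = b then S.getD j ∅ else ∅

/-- `T(A, S)`: the number of bins whose assigned subsets have union the whole
universe. -/
def TonlineU {U : Type*} [Fintype U] [DecidableEq U] (A : List (Finset U) → ℕ)
    (S : List (Finset U)) : ℕ :=
  (((Finset.range S.length).image fun j => A (S.take (j + 1))).filter
    fun b => binUnion A S b = Finset.univ).card

/-- `T_opt(S)`: the maximum number of pairwise disjoint subfamilies of `S`
each of whose union is the whole universe. -/
noncomputable def ToptL {U : Type*} (S : List (Finset U)) : ℕ :=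
  sSup {k | ∃ C : Fin k → Finset (Fin S.length),
    (∀ a b, a ≠ b → Disjoint (C a) (C b)) ∧
    ∀ a, ∀ u : U, ∃ j ∈ C a, u ∈ S.get j}


section OnlineCovers

variable {U : Type*}

theorem mem_binUnion [DecidableEq U] {A : List (Finset U) → ℕ} {S : List (Finset U)} {b : ℕ}
    {x : U} :
    x ∈ binUnion A S b ↔ ∃ j, ∃ hj : j < S.length, A (S.take (j + 1)) = b ∧ x ∈ S[j] := by
  simp only [binUnion, Finset.mem_sup, Finset.mem_range]
  constructor
  · rintro ⟨j, hj, hx⟩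
    split_ifs at hx with hb
    · exact ⟨j, hj, hb, by rwa [List.getD_eq_getElem _ _ hj] at hx⟩
    · simp at hx
  · rintro ⟨j, hj, hb, hx⟩
    exact ⟨j, hj, by rwa [if_pos hb, List.getD_eq_getElem _ _ hj]⟩

theorem tonlineU_le_one [Fintype U] [DecidableEq U] {A : List (Finset U) → ℕ}
    {S : List (Finset U)}
    (h : ∀ b b', binUnion A S b = Finset.univ → binUnion A S b' = Finset.univ → b = b') :
    TonlineU A S ≤ 1 :=
  Finset.card_le_one.mpr fun _ hb _ hb' =>
    h _ _ (Finset.mem_filter.mp hb).2 (Finset.mem_filter.mp hb').2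

/-- Subfamilies given as the fibres of a map are automatically pairwise disjoint. -/
theorem le_toptL_of_fibres_cover [Nonempty U] {S : List (Finset U)} {k : ℕ}
    (owner : Fin S.length → Fin k) (hcover : ∀ a (u : U), ∃ j, owner j = a ∧ u ∈ S.get j) :
    k ≤ ToptL S := by
  refine le_csSup ⟨S.length, ?_⟩ ⟨fun a => {j | owner j = a}, ?_, ?_⟩
  · rintro k' ⟨C, hdisj, hcov⟩
    choose f hf _ using fun a => hcov a (Classical.arbitrary U)
    have hf_inj : Function.Injective f := fun a b hab => by
      by_contra hne
      exact Finset.disjoint_left.mp (hdisj a b hne) (hf a) (hab ▸ hf b)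
    simpa using Fintype.card_le_of_injective f hf_inj
  · intro a b hab
    simp only [Finset.disjoint_left, Finset.mem_filter, Finset.mem_univ, true_and]
    rintro j rfl rfl
    exact hab rfl
  · intro a u
    obtain ⟨j, hj, hu⟩ := hcover a u
    exact ⟨j, by simpa using hj, hu⟩

end OnlineCovers

theorem Fin.castAdd_lt_natAdd {m : ℕ} (p p' : Fin m) : Fin.castAdd m p < Fin.natAdd m p' := by
  simp only [Fin.lt_def, Fin.val_castAdd, Fin.val_natAdd]
  omega

namespace OnlineCoverAdversary

variable {ι : Type*} [Fintype ι] [DecidableEq ι]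

def atom (i : ι) : Finset (ι → Bool) := {x | x i = true}

def completer (i j : ι) : Finset (ι → Bool) := {x | x i = false ∧ x j = false}

variable {m : ℕ} (A : List (Finset (ι → Bool)) → ℕ) (c : Fin (m + m) → ι)

def atoms : List (Finset (ι → Bool)) := List.ofFn fun k => atom (c k)

def atomBin (k : Fin (m + m)) : ℕ := A ((atoms c).take (k + 1))

def binOrder : Equiv.Perm (Fin (m + m)) := Tuple.sort (atomBin A c)

def completers : List (Finset (ι → Bool)) :=
  List.ofFn fun p : Fin m =>
    completer (c (binOrder A c (Fin.castAdd m p))) (c (binOrder A c (Fin.natAdd m p)))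

def adversary : List (Finset (ι → Bool)) := atoms c ++ completers A c

theorem length_adversary : (adversary A c).length = m + m + m := by
  simp [adversary, atoms, completers]

theorem adversary_getElem_atom (k : Fin (m + m)) (h : (k : ℕ) < (adversary A c).length) :
    (adversary A c)[(k : ℕ)] = atom (c k) := by
  simp [adversary, atoms, List.getElem_append_left]

theorem adversary_getElem_completer (p : Fin m) (h : m + m + p < (adversary A c).length) :
    (adversary A c)[m + m + (p : ℕ)] =
      completer (c (binOrder A c (Fin.castAdd m p))) (c (binOrder A c (Fin.natAdd m p))) := by
  simp [adversary, atoms, completers, List.getElem_append_right]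

theorem adversary_take_atom (k : Fin (m + m)) :
    (adversary A c).take (k + 1) = (atoms c).take (k + 1) :=
  List.take_append_of_le_length (by simp [atoms])

def escapee (β : ℕ) : ι → Bool := fun t => decide (∀ k, atomBin A c k = β → c k ≠ t)

variable {c}

theorem escapee_apply_eq_true_iff (hc : Function.Injective c) (β : ℕ) (k : Fin (m + m)) :
    escapee A c β (c k) = true ↔ atomBin A c k ≠ β := by
  simp [escapee, hc.eq_iff, imp_not_comm]

theorem exists_pair_of_full (hc : Function.Injective c) {β : ℕ}
    (hfull : binUnion A (adversary A c) β = Finset.univ) :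
    ∃ p : Fin m, atomBin A c (binOrder A c (Fin.castAdd m p)) = β ∧
      atomBin A c (binOrder A c (Fin.natAdd m p)) = β := by
  obtain ⟨j, hj, hbin, hx⟩ := mem_binUnion.mp (hfull ▸ Finset.mem_univ (escapee A c β))
  have hj_lt := length_adversary A c ▸ hj
  by_cases hjk : j < m + m
  · rw [adversary_getElem_atom A c ⟨j, hjk⟩ hj] at hx
    rw [adversary_take_atom A c ⟨j, hjk⟩] at hbin
    simp only [atom, Finset.mem_filter, Finset.mem_univ, true_and] at hx
    exact absurd hbin ((escapee_apply_eq_true_iff A hc β _).mp hx)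
  · obtain ⟨p, rfl⟩ : ∃ p : Fin m, j = m + m + p := ⟨⟨j - (m + m), by omega⟩, by simp; omega⟩
    rw [adversary_getElem_completer A c p hj] at hx
    simp only [completer, Finset.mem_filter, Finset.mem_univ, true_and, ← Bool.not_eq_true,
      escapee_apply_eq_true_iff A hc, not_not] at hx
    exact ⟨p, hx⟩

theorem eq_of_full (hc : Function.Injective c) {β β' : ℕ}
    (h : binUnion A (adversary A c) β = Finset.univ)
    (h' : binUnion A (adversary A c) β' = Finset.univ) : β = β' := by
  have hmono : Monotone (atomBin A c ∘ binOrder A c) := Tuple.monotone_sort (atomBin A c)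
  obtain ⟨p, hp, hp'⟩ := exists_pair_of_full A hc h
  obtain ⟨r, hr, hr'⟩ := exists_pair_of_full A hc h'
  exact le_antisymm (hp ▸ hr' ▸ hmono (Fin.castAdd_lt_natAdd p r).le)
    (hr ▸ hp' ▸ hmono (Fin.castAdd_lt_natAdd r p).le)

theorem tonlineU_adversary_le_one (hc : Function.Injective c) : TonlineU A (adversary A c) ≤ 1 :=
  tonlineU_le_one fun _ _ => eq_of_full A hc

variable (c)

/-- Groups the atoms of the `p`-th pair and the `p`-th completer into family `p`. -/
def pairIndex : Fin (m + m + m) → Fin m :=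
  Fin.addCases (fun k => Fin.addCases id id ((binOrder A c).symm k)) id

theorem le_toptL_adversary : m ≤ ToptL (adversary A c) := by
  have hlen := length_adversary A c
  refine le_toptL_of_fibres_cover (fun j => pairIndex A c (Fin.cast hlen j)) fun p x => ?_
  by_cases hi : x (c (binOrder A c (Fin.castAdd m p))) = true
  · refine ⟨Fin.cast hlen.symm (Fin.castAdd m (binOrder A c (Fin.castAdd m p))),
      by simp [pairIndex], ?_⟩
    simp [List.get_eq_getElem, adversary_getElem_atom, atom, hi]
  by_cases hj : x (c (binOrder A c (Fin.natAdd m p))) = true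
  · refine ⟨Fin.cast hlen.symm (Fin.castAdd m (binOrder A c (Fin.natAdd m p))),
      by simp [pairIndex, -Fin.natAdd_eq_addNat], ?_⟩
    simp [List.get_eq_getElem, adversary_getElem_atom, atom, hj, -Fin.natAdd_eq_addNat]
  · refine ⟨Fin.cast hlen.symm (Fin.natAdd (m + m) p), by simp [pairIndex], ?_⟩
    simp [List.get_eq_getElem, adversary_getElem_completer, completer, hi, hj,
      -Fin.natAdd_eq_addNat]

end OnlineCoverAdversary

open OnlineCoverAdversary in
/-- (Ω(√(ln n)) lower bound) There is a constant `C > 0` such that for every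
`q ≥ 1` and every deterministic online algorithm `A` over the universe
`U = (Fin q → Bool)` (of size `n = 2^q`), there is an arrival sequence `S` of
subsets of `U` with `T_opt(S) ≥ ⌊q/2⌋` and `T(A, S) ≤ C * √q`.  Since
`q = log₂ n`, every online algorithm has competitive ratio `Ω(√(ln n))`. -/
theorem stmt15 : ∃ C : ℝ, 0 < C ∧
    ∀ q : ℕ, 1 ≤ q →
      ∀ A : List (Finset (Fin q → Bool)) → ℕ,
        ∃ S : List (Finset (Fin q → Bool)),
          q / 2 ≤ ToptL S ∧
          (TonlineU A S : ℝ) ≤ C * Real.sqrt (q : ℝ) := by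
  refine ⟨1, one_pos, fun q hq A => ?_⟩
  set c : Fin (q / 2 + q / 2) → Fin q := Fin.castLE (by omega)
  refine ⟨adversary A c, le_toptL_adversary A c, ?_⟩
  calc (TonlineU A (adversary A c) : ℝ)
      ≤ 1 := mod_cast tonlineU_adversary_le_one A (Fin.castLE_injective _)
    _ ≤ 1 * Real.sqrt q := by
      rw [one_mul]
      exact Real.one_le_sqrt.mpr (mod_cast hq)
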